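/- Let t be a right modified trace on a right tensor ideal I of a pivotal finite tensor category C. Then the annihilator Ann(I, t) = { X ∈ I : t_X(f) = 0 for all f ∈ End(X) } is again a right tensor ideal of C. -/
import Mathlib


open CategoryTheory CategoryTheory.Limits MonoidalCategory

universe v u

variable (k : Type u) [Field k]
variable (C : Type u) [Category.{v} C] [Preadditive C] [Linear k C]
  [MonoidalCategory C] [RightRigidCategory C]

/-- A pivotal structure, presented as the induced right duality data. -/
structure PivotalData where
  evR : ∀ X : C, X ⊗ Xᘁ ⟶ 𝟙_ C
  coevR : ∀ X : C, 𝟙_ C ⟶ Xᘁ ⊗ X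
  zig : ∀ X : C,
    (ρ_ X).inv ≫ (X ◁ coevR X) ≫ (α_ X (Xᘁ) X).inv ≫ (evR X ▷ X) ≫ (λ_ X).hom = 𝟙 X
  zag : ∀ X : C,
    (λ_ (Xᘁ)).inv ≫ (coevR X ▷ (Xᘁ)) ≫ (α_ (Xᘁ) X (Xᘁ)).hom ≫ ((Xᘁ) ◁ evR X) ≫
      (ρ_ (Xᘁ)).hom = 𝟙 (Xᘁ)
  evR_natural : ∀ {X Y : C} (f : X ⟶ Y), (f ▷ (Yᘁ)) ≫ evR Y = (X ◁ fᘁ) ≫ evR X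

/-- A right tensor ideal. -/
structure RightTensorIdeal where
  mem : C → Prop
  tensor_mem : ∀ {X : C}, mem X → ∀ V : C, mem (X ⊗ V)
  retract_mem : ∀ {X Y : C}, mem Y → ∀ (i : X ⟶ Y) (r : Y ⟶ X), i ≫ r = 𝟙 X → mem X

/-- A right modified trace on a right tensor ideal `I`: a family of linear maps
`End(X) → k` for `X ∈ I`, cyclic and satisfying the right partial trace
property (using the right evaluation of the pivotal structure). -/
structure RightModifiedTrace (P : PivotalData C) (I : RightTensorIdeal C) where
  t : ∀ (X : C), I.mem X → (X ⟶ X) → k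
  t_add : ∀ (X : C) (hX : I.mem X) (f g : X ⟶ X), t X hX (f + g) = t X hX f + t X hX g
  t_smul : ∀ (X : C) (hX : I.mem X) (c : k) (f : X ⟶ X), t X hX (c • f) = c • t X hX f
  cyclic : ∀ {X Y : C} (hX : I.mem X) (hY : I.mem Y) (f : X ⟶ Y) (g : Y ⟶ X),
    t X hX (f ≫ g) = t Y hY (g ≫ f)
  partial_trace : ∀ (X : C) (hX : I.mem X) (V : C) (f : X ⊗ V ⟶ X ⊗ V),
    t (X ⊗ V) (I.tensor_mem hX V) f =
      t X hX ((ρ_ X).inv ≫ (X ◁ η_ V (Vᘁ)) ≫ (α_ X V (Vᘁ)).inv ≫ (f ▷ (Vᘁ)) ≫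
        (α_ X V (Vᘁ)).hom ≫ (X ◁ P.evR V) ≫ (ρ_ X).hom)

/-- the annihilator `Ann(I,t) = { X ∈ I : t_X ≡ 0 }` of a right
modified trace `t` on a right tensor ideal `I` is again a right tensor ideal. -/
theorem annihilator_is_right_tensor_ideal
    {k : Type u} [Field k]
    {C : Type u} [Category.{v} C] [Preadditive C] [Linear k C]
    [MonoidalCategory C] [MonoidalPreadditive C] [MonoidalLinear k C]
    [RightRigidCategory C]
    (P : PivotalData C) (I : RightTensorIdeal C) (t : RightModifiedTrace k C P I) :
    ∃ J : RightTensorIdeal C, ∀ X : C,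
      J.mem X ↔ ∃ hX : I.mem X, ∀ f : X ⟶ X, t.t X hX f = 0 := by
  refine ⟨{
    mem := fun X => ∃ hX : I.mem X, ∀ f : X ⟶ X, t.t X hX f = 0
    tensor_mem := ?_
    retract_mem := ?_ }, fun X => Iff.rfl⟩
  · rintro X ⟨hX, hzero⟩ V
    exact ⟨I.tensor_mem hX V, fun f => by
      rw [t.partial_trace X hX V f]; exact hzero _⟩
  · rintro X Y ⟨hY, hzero⟩ i r hir
    have hX : I.mem X := I.retract_mem hY i r hir
    refine ⟨hX, fun f => ?_⟩
    have : t.t X hX f = t.t X hX (i ≫ (r ≫ f)) := by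
      rw [← Category.assoc, hir, Category.id_comp]
    rw [this, t.cyclic hX hY i (r ≫ f)]
    exact hzero _
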